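/- Plancherel identity for the discrete-time SAFT: if c : ℤ → ℂ is absolutely summable, then ∫_0^Δ |Ĉ_A(ω)|² dω = Σ_{k∈ℤ} |c k|². -/

import Mathlib

/-!
Up to the unimodular chirp factor `exp (i (d ω² + Ω ω) / (2b))`, the SAFT is `(2πb)^(-1/2)` times
the `Δ`-periodic Fourier series `∑ₖ c(-k) exp (i (a k² - 2 p k) / (2b)) exp (2π i k ω / Δ)`, whose
coefficients have the moduli of `c`. By absolute summability this series converges uniformly to a
continuous function on `ℝ ⧸ Δℤ` with exactly these Fourier coefficients, so Parseval's identity on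
the circle gives the claim.
-/

open MeasureTheory Real

/-- The discrete-time SAFT of a sequence `c : ℤ → ℂ`, with `Ω = 2*(b*q - d*p)`. -/
noncomputable def dtSAFT (a b d p q : ℝ) (c : ℤ → ℂ) (ω : ℝ) : ℂ :=
  (Real.sqrt (2 * π * b) : ℂ)⁻¹ *
    ∑' k : ℤ, c k * Complex.exp (Complex.I / (2 * b) *
      ((a * (k : ℝ) ^ 2 + d * ω ^ 2 - 2 * (k : ℝ) * ω + 2 * (b * q - d * p) * ω
        + 2 * p * (k : ℝ) : ℝ) : ℂ))

open AddCircle ContinuousMap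

section FourierSeries

variable {T : ℝ} [Fact (0 < T)] {u : ℤ → ℂ} {F : C(AddCircle T, ℂ)}

theorem fourierCoeff_eq_of_hasSum (hF : HasSum (fun n ↦ u n • fourier n) F) :
    fourierCoeff F = u := by
  ext m
  rw [← fourierCoeff_toLp, ← fourierBasis_repr, HilbertBasis.repr_apply_apply, coe_fourierBasis]
  refine ((innerSL ℂ (fourierLp 2 m)).hasSum ((toLp 2 haarAddCircle ℂ).hasSum hF)).unique ?_
  classical
  have h_inner (n : ℤ) :
      innerSL ℂ (fourierLp (T := T) 2 m) (toLp 2 haarAddCircle ℂ (u n • fourier n)) =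
        if n = m then u m else 0 := by
    rcases eq_or_ne n m with rfl | hnm
    · simp [orthonormal_fourier.1]
    · simp [orthonormal_fourier.2 hnm.symm, hnm]
  simpa only [h_inner] using hasSum_ite_eq m (u m)

theorem integral_norm_sq_haarAddCircle_of_hasSum (hF : HasSum (fun n ↦ u n • fourier n) F) :
    ∫ t, ‖F t‖ ^ 2 ∂haarAddCircle = ∑' n, ‖u n‖ ^ 2 := by
  rw [← fourierCoeff_eq_of_hasSum hF]
  simp_rw [← fourierCoeff_toLp F]
  rw [tsum_sq_fourierCoeff]
  refine integral_congr_ae ?_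
  filter_upwards [coeFn_toLp (p := 2) (𝕜 := ℂ) haarAddCircle F] with t ht
  rw [ht]

end FourierSeries

theorem intervalIntegral_norm_sq_tsum_fourier {T : ℝ} (hT : 0 < T) {u : ℤ → ℂ}
    (hu : Summable (‖u ·‖)) :
    ∫ x in (0 : ℝ)..T, ‖∑' n, u n * fourier n (x : AddCircle T)‖ ^ 2 = T * ∑' n, ‖u n‖ ^ 2 := by
  have := Fact.mk hT
  obtain ⟨F, hF⟩ : Summable fun n ↦ u n • fourier (T := T) n :=
    .of_norm (by simpa only [norm_smul, fourier_norm, mul_one] using hu)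
  have hF_apply (x : AddCircle T) : ∑' n, u n * fourier n x = F x :=
    ((evalCLM ℂ x).hasSum hF).tsum_eq
  calc ∫ x in (0 : ℝ)..T, ‖∑' n, u n * fourier n (x : AddCircle T)‖ ^ 2
      = ∫ x in (0 : ℝ)..0 + T, ‖F x‖ ^ 2 := by simp only [hF_apply, zero_add]
    _ = T * ∫ t, ‖F t‖ ^ 2 ∂haarAddCircle := by
        rw [AddCircle.intervalIntegral_preimage T 0 (‖F ·‖ ^ 2), integral_haarAddCircle,
          smul_eq_mul, mul_inv_cancel_left₀ hT.ne']
    _ = T * ∑' n, ‖u n‖ ^ 2 := by rw [integral_norm_sq_haarAddCircle_of_hasSum hF]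

open Complex

noncomputable def dtSAFTFourierCoeff (a b p : ℝ) (c : ℤ → ℂ) (k : ℤ) : ℂ :=
  c (-k) * exp (((a * (k : ℝ) ^ 2 - 2 * p * k) / (2 * b) : ℝ) * I)

theorem norm_dtSAFTFourierCoeff (a b p : ℝ) (c : ℤ → ℂ) (k : ℤ) :
    ‖dtSAFTFourierCoeff a b p c k‖ = ‖c (-k)‖ := by
  rw [dtSAFTFourierCoeff, norm_mul, norm_exp_ofReal_mul_I, mul_one]

theorem dtSAFT_eq_mul_tsum_fourier {a b d p q : ℝ} (hb : 0 < b) (c : ℤ → ℂ) (ω : ℝ) :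
    dtSAFT a b d p q c ω = (Real.sqrt (2 * π * b) : ℂ)⁻¹ *
      (exp (((d * ω ^ 2 + 2 * (b * q - d * p) * ω) / (2 * b) : ℝ) * I) *
      ∑' k, dtSAFTFourierCoeff a b p c k * fourier k (ω : AddCircle (2 * π * b))) := by
  have hterm (k : ℤ) : c k * exp (I / (2 * b) * ((a * (k : ℝ) ^ 2 + d * ω ^ 2 - 2 * (k : ℝ) * ω
      + 2 * (b * q - d * p) * ω + 2 * p * (k : ℝ) : ℝ) : ℂ)) =
      exp (((d * ω ^ 2 + 2 * (b * q - d * p) * ω) / (2 * b) : ℝ) * I) *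
      (dtSAFTFourierCoeff a b p c (-k) * fourier (-k) (ω : AddCircle (2 * π * b))) := by
    have hphase : I / (2 * b) * ((a * (k : ℝ) ^ 2 + d * ω ^ 2 - 2 * (k : ℝ) * ω
        + 2 * (b * q - d * p) * ω + 2 * p * (k : ℝ) : ℝ) : ℂ) =
        ((d * ω ^ 2 + 2 * (b * q - d * p) * ω) / (2 * b) : ℝ) * I +
        ((a * ((-k : ℤ) : ℝ) ^ 2 - 2 * p * (-k : ℤ)) / (2 * b) : ℝ) * I +
        2 * π * I * (-k : ℤ) * ω / (2 * π * b : ℝ) := by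
      have : (π : ℂ) ≠ 0 := ofReal_ne_zero.mpr pi_ne_zero
      have : (b : ℂ) ≠ 0 := ofReal_ne_zero.mpr hb.ne'
      push_cast
      field_simp
      ring
    rw [fourier_coe_apply, dtSAFTFourierCoeff, neg_neg, hphase, Complex.exp_add,
      Complex.exp_add]
    ring
  rw [dtSAFT, tsum_congr hterm, tsum_mul_left]
  congr 2
  exact (Equiv.neg ℤ).tsum_eq fun k ↦ dtSAFTFourierCoeff a b p c k * fourier k (ω : AddCircle _)

theorem norm_dtSAFT {a b d p q : ℝ} (hb : 0 < b) (c : ℤ → ℂ) (ω : ℝ) :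
    ‖dtSAFT a b d p q c ω‖ = (Real.sqrt (2 * π * b))⁻¹ *
      ‖∑' k, dtSAFTFourierCoeff a b p c k * fourier k (ω : AddCircle (2 * π * b))‖ := by
  rw [dtSAFT_eq_mul_tsum_fourier hb, norm_mul, norm_mul, norm_exp_ofReal_mul_I, one_mul,
    norm_inv, norm_real, norm_of_nonneg (Real.sqrt_nonneg _)]

theorem dtSAFT_plancherel_general (a b d p q : ℝ) (hb : 0 < b)
    (cseq : ℤ → ℂ) (hc : Summable fun k : ℤ => ‖cseq k‖) :
    (∫ ω in (0:ℝ)..(2 * π * b), ‖dtSAFT a b d p q cseq ω‖ ^ 2) =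
      ∑' k : ℤ, ‖cseq k‖ ^ 2 := by
  have hT : 0 < 2 * π * b := by positivity
  have hu : Summable (‖dtSAFTFourierCoeff a b p cseq ·‖) := by
    simpa only [norm_dtSAFTFourierCoeff, Function.comp_def] using
      hc.comp_injective neg_injective
  simp_rw [norm_dtSAFT hb, mul_pow, inv_pow, sq_sqrt hT.le]
  rw [intervalIntegral.integral_const_mul, intervalIntegral_norm_sq_tsum_fourier hT hu,
    inv_mul_cancel_left₀ hT.ne']
  simp_rw [norm_dtSAFTFourierCoeff]
  exact (Equiv.neg ℤ).tsum_eq (‖cseq ·‖ ^ 2)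

/-- Plancherel identity for the discrete-time SAFT over one period `[0, Δ]`, `Δ = 2πb`. -/
theorem dtSAFT_plancherel (a b c d p q : ℝ) (hb : 0 < b) (habcd : a * d - b * c = 1)
    (cseq : ℤ → ℂ) (hc : Summable fun k : ℤ => ‖cseq k‖) :
    (∫ ω in (0:ℝ)..(2 * π * b), ‖dtSAFT a b d p q cseq ω‖ ^ 2) =
      ∑' k : ℤ, ‖cseq k‖ ^ 2 :=
  dtSAFT_plancherel_general a b d p q hb cseq hc
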